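/- arXiv:1103.2685 — 2 statements merged into one kernel-verified Lean document; each statement's English description precedes it below -/
import Mathlib

section
/- Let m, n be integers with n > m ≥ 5 and (m-1) | (n-3). Let G_m be a connected graph of order m with ex(m+n-3; G_m) ≤ (m-2)(m+n-3)/2, and assume ex(m+n-3; T_n*) ≤ (n-2)(m+n-4)/2. Then r(G_m, T_n*) = m+n-3. -/
/-!
Upper bound: a graph on `p = m + n - 3` vertices not containing `G_m`, whose complement does not
contain `Tₙ*`, has at most `ex(p; G_m)` edges while its complement has at most `ex(p; Tₙ*)`; the
two hypotheses make these add up to less than `p.choose 2`.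

Lower bound: write `n - 3 = k (m - 1)`. The disjoint union of `k + 1` cliques `K_{m-1}` has no
connected subgraph of order `m`, and its complement, the complete `(k + 1)`-partite graph with
parts of size `m - 1`, contains no `Tₙ*`: in a proper colouring of `Tₙ*` at most two vertices
share the colour of `v₀`, so the remaining `n - 2` would have to fit among the `n - 3` vertices
outside the part of `v₀`.
-/

open SimpleGraph

/-- `G` contains a copy of `H` as a subgraph. -/
def Contains {V W : Type*} (G : SimpleGraph V) (H : SimpleGraph W) : Prop :=
  ∃ f : W ↪ V, ∀ a b, H.Adj a b → G.Adj (f a) (f b)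

/-- The Turán number `ex(p; L)`: the maximum number of edges in a simple graph
on `p` vertices not containing `L` as a subgraph. -/
noncomputable def exNum (p : ℕ) {W : Type*} (L : SimpleGraph W) : ℕ :=
  sSup {k | ∃ G : SimpleGraph (Fin p), ¬ Contains G L ∧ G.edgeSet.ncard = k}

/-- The Ramsey number `r(G₁, G₂)`: the least positive `N` such that every graph on
`N` vertices contains `G₁` or its complement contains `G₂`. -/
noncomputable def ramsey {V W : Type*} (G₁ : SimpleGraph V) (G₂ : SimpleGraph W) : ℕ :=
  sInf {N | 0 < N ∧ ∀ G : SimpleGraph (Fin N), Contains G G₁ ∨ Contains Gᶜ G₂}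

/-- The tree `Tₙ*` on `n` vertices with edges `v₀v₁, …, v₀v_{n-3}, v_{n-3}v_{n-2},
v_{n-2}v_{n-1}`. -/
def Tstar (n : ℕ) : SimpleGraph (Fin n) :=
  SimpleGraph.fromRel (fun a b =>
    (a.val = 0 ∧ 1 ≤ b.val ∧ b.val ≤ n - 3) ∨ (a.val = n - 3 ∧ b.val = n - 2) ∨
      (a.val = n - 2 ∧ b.val = n - 1))

/-- The star `K_{1,n-1}` on `n` vertices with center `0`. -/
def starGraph (n : ℕ) : SimpleGraph (Fin n) :=
  SimpleGraph.fromRel (fun a _ => a.val = 0)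

open Finset

lemma Contains.of_comap {V V' W : Type*} {G : SimpleGraph V} {L : SimpleGraph W} (e : V' ↪ V)
    (h : Contains (G.comap e) L) : Contains G L := by
  obtain ⟨f, hf⟩ := h
  exact ⟨f.trans e, hf⟩

lemma Contains.compl_of_comap {V V' W : Type*} {G : SimpleGraph V} {L : SimpleGraph W}
    (e : V' ↪ V) (h : Contains (G.comap e)ᶜ L) : Contains Gᶜ L := by
  obtain ⟨f, hf⟩ := h
  refine ⟨f.trans e, fun a b hab => ?_⟩
  obtain ⟨hne, hnadj⟩ := hf a b hab
  exact ⟨e.injective.ne hne, hnadj⟩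

/-- Restricting `H` to fewer vertices shows that no smaller `N` works. -/
lemma ramsey_eq_card_add_one {V W V₀ : Type*} [Fintype V₀] {G₁ : SimpleGraph V}
    {G₂ : SimpleGraph W} (H : SimpleGraph V₀) (hH : ¬ Contains H G₁) (hHc : ¬ Contains Hᶜ G₂)
    (hgood : ∀ G : SimpleGraph (Fin (Fintype.card V₀ + 1)), Contains G G₁ ∨ Contains Gᶜ G₂) :
    ramsey G₁ G₂ = Fintype.card V₀ + 1 := by
  have hmem : Fintype.card V₀ + 1 ∈
      {N | 0 < N ∧ ∀ G : SimpleGraph (Fin N), Contains G G₁ ∨ Contains Gᶜ G₂} :=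
    ⟨Nat.succ_pos _, hgood⟩
  refine le_antisymm (Nat.sInf_le hmem) (le_csInf ⟨_, hmem⟩ ?_)
  rintro N ⟨-, hN⟩
  by_contra! hlt
  let e : Fin N ↪ V₀ :=
    (Fin.castLEEmb (Nat.lt_succ_iff.mp hlt)).trans (Fintype.equivFin V₀).symm.toEmbedding
  rcases hN (H.comap e) with h | h
  · exact hH (h.of_comap e)
  · exact hHc (h.compl_of_comap e)

lemma ncard_edgeSet_le_exNum {p : ℕ} {W : Type*} (L : SimpleGraph W) (G : SimpleGraph (Fin p))
    (h : ¬ Contains G L) : G.edgeSet.ncard ≤ exNum p L := by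
  refine le_csSup ⟨Fintype.card (Sym2 (Fin p)), ?_⟩ ⟨G, h, rfl⟩
  rintro k ⟨G', -, rfl⟩
  simpa [Set.ncard_univ] using Set.ncard_le_ncard (Set.subset_univ G'.edgeSet)

lemma ncard_edgeSet_add_ncard_edgeSet_compl {V : Type*} [Fintype V] (G : SimpleGraph V) :
    G.edgeSet.ncard + Gᶜ.edgeSet.ncard = (Fintype.card V).choose 2 := by
  classical
  rw [← Set.ncard_union_eq (disjoint_edgeSet.2 disjoint_compl_right), ← edgeSet_sup,
    sup_compl_eq_top, ← card_edgeFinset_top_eq_card_choose_two, ← Set.ncard_coe_finset,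
    coe_edgeFinset]

lemma contains_or_compl_contains_of_exNum_add_lt {p : ℕ} {V W : Type*} {G₁ : SimpleGraph V}
    {G₂ : SimpleGraph W} (h : exNum p G₁ + exNum p G₂ < p.choose 2) (G : SimpleGraph (Fin p)) :
    Contains G G₁ ∨ Contains Gᶜ G₂ := by
  by_contra! hG
  have h₁ := ncard_edgeSet_le_exNum G₁ G hG.1
  have h₂ := ncard_edgeSet_le_exNum G₂ Gᶜ hG.2
  have hsum := ncard_edgeSet_add_ncard_edgeSet_compl G
  rw [Fintype.card_fin] at hsum
  omega

lemma Tstar_adj_zero {n : ℕ} (j : Fin n) (h₁ : 1 ≤ j.val) (h₂ : j.val ≤ n - 3) :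
    (Tstar n).Adj ⟨0, by omega⟩ j :=
  ⟨fun he => by simp [Fin.ext_iff] at he; omega, Or.inl (Or.inl ⟨rfl, h₁, h₂⟩)⟩

lemma Tstar_adj_end {n : ℕ} (hn : 2 ≤ n) : (Tstar n).Adj ⟨n - 2, by omega⟩ ⟨n - 1, by omega⟩ :=
  ⟨fun he => by simp [Fin.ext_iff] at he; omega, Or.inl (Or.inr (Or.inr ⟨rfl, rfl⟩))⟩

/-- All of `v₁, …, v_{n-3}` are neighbours of `v₀`, and `v_{n-2}, v_{n-1}` are adjacent. -/
lemma Tstar_card_colorClass_zero_le_two {n : ℕ} (hn : 2 ≤ n) {ι : Type*} [DecidableEq ι]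
    (c : Fin n → ι) (hc : ∀ a b, (Tstar n).Adj a b → c a ≠ c b) :
    #{j | c j = c ⟨0, by omega⟩} ≤ 2 := by
  set v₀ : Fin n := ⟨0, by omega⟩
  set a : Fin n := ⟨n - 2, by omega⟩
  set b : Fin n := ⟨n - 1, by omega⟩
  have hclass : ∀ j, c j = c v₀ → j = v₀ ∨ j = a ∨ j = b := by
    intro j hj
    by_contra! hne
    simp only [v₀, a, b, ne_eq, Fin.ext_iff] at hne
    exact hc _ _ (Tstar_adj_zero j (by omega) (by omega)) hj.symm
  obtain ⟨w, hw⟩ : ∃ w, ∀ j, c j = c v₀ → j = v₀ ∨ j = w := by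
    by_cases ha : c a = c v₀
    · refine ⟨a, fun j hj => ?_⟩
      rcases hclass j hj with h | h | rfl
      · exact .inl h
      · exact .inr h
      · exact absurd (hj.trans ha.symm) (hc _ _ (Tstar_adj_end hn)).symm
    · refine ⟨b, fun j hj => ?_⟩
      rcases hclass j hj with h | rfl | h
      · exact .inl h
      · exact absurd hj ha
      · exact .inr h
  calc #{j | c j = c v₀} ≤ #{v₀, w} :=
        card_le_card fun j hj => by simpa using hw j (by simpa using hj)
    _ ≤ 2 := card_le_two

lemma not_contains_Tstar_completeEquipartiteGraph {n r t : ℕ} (hn : 2 ≤ n)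
    (h : (r - 1) * t < n - 2) : ¬ Contains (completeEquipartiteGraph r t) (Tstar n) := by
  rintro ⟨f, hf⟩
  set v₀ : Fin n := ⟨0, by omega⟩
  have hclass : #{j | (f j).1 = (f v₀).1} ≤ 2 :=
    Tstar_card_colorClass_zero_le_two hn (fun j => (f j).1) hf
  have hsplit := card_filter_add_card_filter_not (s := univ)
    (fun j : Fin n => (f j).1 = (f v₀).1)
  have hmaps : Set.MapsTo f (({j | ¬ (f j).1 = (f v₀).1} : Finset (Fin n)) : Set (Fin n))
      ((completeEquipartiteGraph r t).neighborFinset (f v₀)) := fun j hj => by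
    simpa [eq_comm] using hj
  have := card_le_card_of_injOn f hmaps f.injective.injOn
  rw [card_neighborFinset_eq_degree, degree_completeEquipartiteGraph] at this
  rw [card_univ, Fintype.card_fin] at hsplit
  omega

lemma not_contains_compl_completeEquipartiteGraph_of_connected {W : Type*} [Fintype W]
    {L : SimpleGraph W} (hL : L.Connected) {r t : ℕ} (h : t < Fintype.card W) :
    ¬ Contains (completeEquipartiteGraph r t)ᶜ L := by
  rintro ⟨f, hf⟩
  have hpart : ∀ {x y : W}, L.Walk x y → (f x).1 = (f y).1 := by
    intro x y w
    induction w with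
    | nil => rfl
    | cons hxy _ ih => exact (not_not.mp (hf _ _ hxy).2).trans ih
  obtain ⟨x₀⟩ := hL.nonempty
  have hinj : Function.Injective fun x => (f x).2 := fun x y hxy =>
    f.injective (Prod.ext ((hpart (hL.preconnected x₀ x).some).symm.trans
      (hpart (hL.preconnected x₀ y).some)) hxy)
  simpa using (Fintype.card_le_of_injective _ hinj).trans_lt' h

theorem stmt10 {m n : ℕ} (hm : 5 ≤ m) (hmn : m < n) (hdvd : (m - 1) ∣ (n - 3))
    (Gm : SimpleGraph (Fin m)) (hconn : Gm.Connected)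
    (hex : 2 * exNum (m + n - 3) Gm ≤ (m - 2) * (m + n - 3))
    (hexT : 2 * exNum (m + n - 3) (Tstar n) ≤ (n - 2) * (m + n - 4)) :
    ramsey Gm (Tstar n) = m + n - 3 := by
  obtain ⟨k, hk⟩ := hdvd
  have hcard : Fintype.card (Fin (k + 1) × Fin (m - 1)) + 1 = m + n - 3 := by
    rw [Fintype.card_prod, Fintype.card_fin, Fintype.card_fin, add_mul, one_mul, mul_comm, ← hk]
    omega
  rw [← hcard]
  have hGm : ¬ Contains (completeEquipartiteGraph (k + 1) (m - 1))ᶜ Gm :=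
    not_contains_compl_completeEquipartiteGraph_of_connected hconn (by simp; omega)
  have hT : ¬ Contains (completeEquipartiteGraph (k + 1) (m - 1))ᶜᶜ (Tstar n) := by
    rw [compl_compl]
    exact not_contains_Tstar_completeEquipartiteGraph (by omega)
      (by rw [Nat.add_sub_cancel, mul_comm, ← hk]; omega)
  refine ramsey_eq_card_add_one _ hGm hT ?_
  rw [hcard]
  refine contains_or_compl_contains_of_exNum_add_lt ?_
  obtain ⟨x, rfl⟩ : ∃ x, m = x + 2 := ⟨m - 2, by omega⟩
  obtain ⟨y, rfl⟩ : ∃ y, n = y + 3 := ⟨n - 3, by omega⟩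
  simp only [show x + 2 + (y + 3) - 3 = x + y + 2 by omega,
    show x + 2 + (y + 3) - 4 = x + y + 1 by omega, show y + 3 - 2 = y + 1 by omega,
    Nat.add_sub_cancel] at hex hexT ⊢
  have hchoose : 2 * (x + y + 2).choose 2 = (x + y + 2) * (x + y + 1) := by
    rw [Nat.choose_two_right, Nat.mul_div_cancel' (Nat.even_mul_pred_self _).two_dvd]
    rfl
  -- `(x + y + 2) (x + y + 1) = x (x + y + 2) + (y + 1) (x + y + 1) + (y + 1)`
  nlinarith
end

section
/- Let m, n ∈ ℕ with n > m ≥ 5 and (m-1) ∤ (n-2). If m+n-4 = (m-1)x + (m-2)y + 2(m-3)z for some nonnegative integers x, y, z, then r(T_m*, K_{1,n-1}) = m+n-3, assuming the upper bound r(T_m*, K_{1,n-1}) ≤ m+n-3. -/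
open SimpleGraph

/-!
Write `m = k + 3`. The graph `x K_{k+2} ∪ y K_{k+1} ∪ z K_{k,k}` on `m + n - 4` vertices contains
no `T_m*`: a copy of this connected tree lies in a single block, the cliques have fewer than `m`
vertices, and in `K_{k,k}` the `k + 1` vertices `v₁, …, v_k, v_{m-1}` at odd distance from `v₀`
would all be neighbours of the image of `v₀`, which has only `k`. Every vertex has degree at least
`k`, so the complement has maximum degree at most `n - 2` and contains no `K_{1,n-1}`.

Since `sInf ∅ = 0`, concluding `m + n - 4 < r(T_m*, K_{1,n-1})` also needs some `N` with the
Ramsey property: on `m + n - 2` vertices either some vertex has `n - 1` non-neighbours, or every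
degree is at least `m - 1` and `T_m*` embeds greedily.
-/

open Finset Function

section Contains

variable {V W : Type*}

lemma Contains.card_le [Fintype V] [Fintype W] {G : SimpleGraph V} {H : SimpleGraph W}
    (h : Contains G H) : Fintype.card W ≤ Fintype.card V :=
  h.elim fun f _ => Fintype.card_le_of_embedding f

lemma SimpleGraph.Preconnected.apply_eq_of_forall_adj {β : Type*} {H : SimpleGraph W}
    (hH : H.Preconnected) {φ : W → β} (hφ : ∀ a b, H.Adj a b → φ a = φ b) (a b : W) :
    φ a = φ b := by
  obtain ⟨p⟩ := hH a b
  induction p with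
  | nil => rfl
  | cons h _ ih => exact (hφ _ _ h).trans ih

lemma Contains.of_bot_boxProd {ι : Type*} {G : SimpleGraph V} {H : SimpleGraph W}
    (hH : H.Preconnected) (h : Contains ((⊥ : SimpleGraph ι) □ G) H) : Contains G H := by
  obtain ⟨f, hf⟩ := h
  have hadj : ∀ a b, H.Adj a b → (f a).1 = (f b).1 ∧ G.Adj (f a).2 (f b).2 := fun a b hab => by
    simpa [boxProd_adj, and_comm] using hf a b hab
  have hfst := hH.apply_eq_of_forall_adj fun a b hab => (hadj a b hab).1
  exact ⟨⟨fun w => (f w).2, fun a b hab => f.injective (Prod.ext (hfst a b) hab)⟩,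
    fun a b hab => (hadj a b hab).2⟩

lemma Contains.of_sum {V₁ V₂ : Type*} {G₁ : SimpleGraph V₁} {G₂ : SimpleGraph V₂}
    {H : SimpleGraph W} (hH : H.Preconnected) (h : Contains (G₁ ⊕g G₂) H) :
    Contains G₁ H ∨ Contains G₂ H := by
  obtain ⟨f, hf⟩ := h
  have hside := hH.apply_eq_of_forall_adj (φ := fun w => (f w).isLeft) fun a b hab => by
    have := hf a b hab
    rcases hfa : f a with x | x <;> rcases hfb : f b with y | y <;> simp [hfa, hfb] at this ⊢
  by_cases hl : ∀ w, (f w).isLeft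
  · choose g hg using fun w => Sum.isLeft_iff.1 (hl w)
    refine Or.inl ⟨⟨g, fun a b hab => f.injective (by rw [hg, hg, hab])⟩, fun a b hab => ?_⟩
    show G₁.Adj (g a) (g b)
    simpa only [hg, sum_adj_inl] using hf a b hab
  · push Not at hl
    obtain ⟨w₀, hw₀⟩ := hl
    choose g hg using fun w => Sum.isRight_iff.1 (Sum.not_isLeft.1 (hside w w₀ ▸ hw₀))
    refine Or.inr ⟨⟨g, fun a b hab => f.injective (by rw [hg, hg, hab])⟩, fun a b hab => ?_⟩
    show G₂.Adj (g a) (g b)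
    simpa only [hg, sum_adj_inr] using hf a b hab

end Contains

section Tstar

variable {k : ℕ}

lemma Tstar_adj_zero_s15 {i : Fin (k + 3)} (h₁ : 1 ≤ i.val) (h₂ : i.val ≤ k) :
    (Tstar (k + 3)).Adj 0 i := by
  rw [Tstar, fromRel_adj]
  exact ⟨fun h => by simp [← h] at h₁, Or.inl (Or.inl ⟨Fin.val_zero _, h₁, by omega⟩)⟩

lemma Tstar_adj_tail {i j : Fin (k + 3)} (hi : k ≤ i.val) (hj : j.val = i.val + 1) :
    (Tstar (k + 3)).Adj i j := by
  rw [Tstar, fromRel_adj]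
  exact ⟨fun h => by subst h; omega, Or.inl (by omega)⟩

lemma preconnected_Tstar : (Tstar (k + 3)).Preconnected := by
  have hhead : ∀ i : Fin (k + 3), i.val ≤ k → (Tstar (k + 3)).Reachable 0 i := fun i hi => by
    rcases Nat.eq_zero_or_pos i.val with h | h
    · rw [show i = 0 from Fin.ext h]
    · exact (Tstar_adj_zero_s15 h hi).reachable
  have hmid := (hhead ⟨k, by omega⟩ le_rfl).trans
    (Tstar_adj_tail (j := ⟨k + 1, by omega⟩) le_rfl rfl).reachable
  have hlast := hmid.trans (Tstar_adj_tail (j := ⟨k + 2, by omega⟩) (by simp) rfl).reachable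
  suffices h : ∀ i, (Tstar (k + 3)).Reachable 0 i from fun a b => (h a).symm.trans (h b)
  intro i
  rcases (by omega : i.val ≤ k ∨ i.val = k + 1 ∨ i.val = k + 2) with h | h | h
  · exact hhead i h
  · rwa [show i = ⟨k + 1, by omega⟩ from Fin.ext h]
  · rwa [show i = ⟨k + 2, by omega⟩ from Fin.ext h]

/-- The vertex sequence `u, leaves, p, q` realises `v₀, …, v_{k+2}`. -/
lemma contains_Tstar_of_adj {V : Type*} {G : SimpleGraph V} (hk : 1 ≤ k) {u p q : V}
    {leaves : Fin k → V} (hinj : Injective (Fin.snoc (Fin.snoc (Fin.cons u leaves) p) q))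
    (hleaves : ∀ i, G.Adj u (leaves i)) (hp : G.Adj (leaves ⟨k - 1, by omega⟩) p)
    (hq : G.Adj p q) : Contains G (Tstar (k + 3)) := by
  set f : Fin (k + 3) → V := Fin.snoc (Fin.snoc (Fin.cons u leaves) p) q
  have hfleaf : ∀ i : Fin (k + 3), (h₁ : 1 ≤ i.val) → (h₂ : i.val ≤ k) →
      f i = leaves ⟨i.val - 1, by omega⟩ := by
    rintro ⟨_ | j, hj⟩ h₁ h₂ <;> dsimp only at h₁ h₂
    · omega
    · simp [f, Fin.snoc, show j + 1 < k + 1 by omega, show j ≤ k by omega]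
      exact Fin.cons_succ (α := fun _ => V) u leaves ⟨j, by omega⟩
  have hfp : ∀ i : Fin (k + 3), i.val = k + 1 → f i = p := fun i hi => by
    simp [f, Fin.snoc, hi]
  have hfq : ∀ i : Fin (k + 3), i.val = k + 2 → f i = q := fun i hi => by
    simp [f, Fin.snoc, hi]
  have hedge : ∀ a b : Fin (k + 3), (a.val = 0 ∧ 1 ≤ b.val ∧ b.val ≤ k ∨
      a.val = k ∧ b.val = k + 1 ∨ a.val = k + 1 ∧ b.val = k + 2) → G.Adj (f a) (f b) := by
    rintro a b (⟨ha, h₁, h₂⟩ | ⟨ha, hb⟩ | ⟨ha, hb⟩)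
    · obtain rfl : a = 0 := Fin.ext ha
      rw [hfleaf _ h₁ h₂]
      exact hleaves _
    · have hfa := hfleaf a (by omega) (by omega)
      simp only [ha] at hfa
      rw [hfa, hfp b hb]
      exact hp
    · rw [hfp a ha, hfq b hb]
      exact hq
  refine ⟨⟨f, hinj⟩, fun a b hab => ?_⟩
  rw [Tstar, fromRel_adj] at hab
  rcases (by omega : (a.val = 0 ∧ 1 ≤ b.val ∧ b.val ≤ k ∨ a.val = k ∧ b.val = k + 1 ∨
      a.val = k + 1 ∧ b.val = k + 2) ∨ (b.val = 0 ∧ 1 ≤ a.val ∧ a.val ≤ k ∨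
      b.val = k ∧ a.val = k + 1 ∨ b.val = k + 1 ∧ a.val = k + 2)) with h | h
  · exact hedge a b h
  · exact (hedge b a h).symm

end Tstar

section Degree

variable {V : Type*} [Fintype V] {G : SimpleGraph V} [DecidableRel G.Adj]

lemma contains_starGraph_iff {n : ℕ} (hn : 0 < n) :
    Contains G (_root_.starGraph n) ↔ ∃ v, n - 1 ≤ G.degree v := by
  obtain ⟨n, rfl⟩ : ∃ k, n = k + 1 := ⟨n - 1, by omega⟩
  rw [add_tsub_cancel_right]
  constructor
  · rintro ⟨f, hf⟩
    refine ⟨f 0, ?_⟩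
    calc n = #((univ.erase 0).map f) := by simp
      _ ≤ G.degree (f 0) := by
        rw [← card_neighborFinset_eq_degree]
        refine card_le_card fun v hv => ?_
        obtain ⟨i, hi, rfl⟩ := mem_map.1 hv
        exact (mem_neighborFinset _ _ _).2 (hf 0 i ⟨(ne_of_mem_erase hi).symm, by simp⟩)
  · rintro ⟨v, hv⟩
    obtain ⟨e⟩ : Nonempty (Fin n ↪ G.neighborSet v) := Function.Embedding.nonempty_of_card_le
      (by rwa [card_neighborSet_eq_degree, Fintype.card_fin])
    have hv : v ∉ Set.range fun i => (e i : V) := by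
      rintro ⟨i, hi⟩
      exact G.ne_of_adj (e i).2 hi.symm
    refine ⟨⟨Fin.cons v fun i => e i, Fin.cons_injective_iff.2
      ⟨hv, Subtype.val_injective.comp e.injective⟩⟩, fun a b hab => ?_⟩
    rw [_root_.starGraph, fromRel_adj] at hab
    obtain ⟨hne, h | h⟩ := hab
    · obtain rfl : a = 0 := Fin.ext h
      obtain ⟨j, rfl⟩ := Fin.exists_succ_eq.2 hne.symm
      simpa only [Embedding.coeFn_mk, Fin.cons_zero, Fin.cons_succ, ← mem_neighborSet]
        using (e j).2
    · obtain rfl : b = 0 := Fin.ext h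
      obtain ⟨j, rfl⟩ := Fin.exists_succ_eq.2 hne
      simpa only [Embedding.coeFn_mk, Fin.cons_zero, Fin.cons_succ, ← mem_neighborSet]
        using (e j).2.symm

lemma not_contains_compl_starGraph_of_le_degree {δ n : ℕ} (hn : 0 < n)
    (hδ : ∀ v, δ ≤ G.degree v) (hV : Fintype.card V < n + δ) :
    ¬ Contains Gᶜ (_root_.starGraph n) := by
  classical
  rw [contains_starGraph_iff hn]
  rintro ⟨v, hv⟩
  have := G.degree_compl v
  have := G.degree_lt_card_verts v
  have := hδ v
  omega

lemma contains_Tstar_of_le_degree [Nonempty V] {k : ℕ} (hk : 1 ≤ k)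
    (hdeg : ∀ v, k + 2 ≤ G.degree v) : Contains G (Tstar (k + 3)) := by
  classical
  obtain ⟨u⟩ := ‹Nonempty V›
  obtain ⟨e⟩ : Nonempty (Fin k ↪ G.neighborSet u) := Function.Embedding.nonempty_of_card_le
    (by rw [card_neighborSet_eq_degree, Fintype.card_fin]; linarith [hdeg u])
  set leaves : Fin k → V := fun i => e i
  have hleaves : ∀ i, G.Adj u (leaves i) := fun i => (e i).2
  set used := insert u (univ.image leaves)
  have fresh : ∀ v, ∃ w, G.Adj v w ∧ w ∉ used := fun v => by
    have : #used < #(G.neighborFinset v) := by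
      rw [card_neighborFinset_eq_degree]
      linarith [card_insert_le u (univ.image leaves), card_image_le (s := univ) (f := leaves),
        hdeg v, card_fin k]
    obtain ⟨w, hw, hwu⟩ := exists_mem_notMem_of_card_lt_card this
    exact ⟨w, (mem_neighborFinset _ _ _).1 hw, hwu⟩
  obtain ⟨p, hp, hpu⟩ := fresh (leaves ⟨k - 1, by omega⟩)
  obtain ⟨q, hq, hqu⟩ := fresh p
  simp only [used, mem_insert, mem_image, mem_univ, true_and, not_or, not_exists] at hpu hqu
  refine contains_Tstar_of_adj hk ?_ hleaves hp hq
  simp only [Fin.snoc_injective_iff, Fin.cons_injective_iff, Fin.range_snoc, Fin.range_cons,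
    Set.mem_insert_iff, Set.mem_range, not_or, not_exists]
  exact ⟨⟨⟨fun i hi => G.ne_of_adj (hleaves i) hi.symm,
    Subtype.val_injective.comp e.injective⟩, hpu⟩, hq.ne', hqu⟩

end Degree

section CompleteBipartite

variable {α β : Type*}

lemma degree_completeBipartiteGraph_inl [Fintype β] (a : α)
    [Fintype ((completeBipartiteGraph α β).neighborSet (.inl a))] :
    (completeBipartiteGraph α β).degree (.inl a) = Fintype.card β := by
  have h : (completeBipartiteGraph α β).neighborSet (.inl a) = Set.range Sum.inr := by
    ext (v | v) <;> simp
  rw [← card_neighborSet_eq_degree]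
  exact Fintype.card_congr ((Equiv.setCongr h).trans (Equiv.ofInjective _ Sum.inr_injective).symm)

lemma degree_completeBipartiteGraph_inr [Fintype α] (b : β)
    [Fintype ((completeBipartiteGraph α β).neighborSet (.inr b))] :
    (completeBipartiteGraph α β).degree (.inr b) = Fintype.card α := by
  have h : (completeBipartiteGraph α β).neighborSet (.inr b) = Set.range Sum.inl := by
    ext (v | v) <;> simp
  rw [← card_neighborSet_eq_degree]
  exact Fintype.card_congr ((Equiv.setCongr h).trans (Equiv.ofInjective _ Sum.inl_injective).symm)

lemma not_contains_Tstar_completeBipartiteGraph [Fintype α] [Fintype β] {k : ℕ} (hk : 1 ≤ k)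
    (hα : Fintype.card α ≤ k) (hβ : Fintype.card β ≤ k) :
    ¬ Contains (completeBipartiteGraph α β) (Tstar (k + 3)) := by
  classical
  rintro ⟨f, hf⟩
  set K := completeBipartiteGraph α β
  have hpath : ∀ {a b c d}, K.Adj a b → K.Adj b c → K.Adj c d → K.Adj a d := by
    rintro (a | a) (b | b) (c | c) (d | d) <;> simp [K]
  set S := (univ.erase 0).erase (⟨k + 1, by omega⟩ : Fin (k + 3))
  have hS : ∀ i ∈ S, K.Adj (f 0) (f i) := fun i hi => by
    simp only [S, mem_erase, ne_eq, mem_univ, and_true, Fin.ext_iff, Fin.val_zero] at hi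
    rcases (by omega : i.val ≤ k ∨ i.val = k + 2) with h | h
    · exact hf _ _ (Tstar_adj_zero_s15 (by omega) h)
    · exact hpath (hf _ _ (Tstar_adj_zero_s15 (i := ⟨k, by omega⟩) hk le_rfl))
        (hf _ _ (Tstar_adj_tail (j := ⟨k + 1, by omega⟩) le_rfl rfl))
        (hf _ _ (Tstar_adj_tail (by simp) (by simp [h])))
  have hlow : k + 1 ≤ K.degree (f 0) :=
    calc k + 1 = #(S.map f) := by simp [S, card_erase_of_mem]
      _ ≤ K.degree (f 0) := by
        rw [← card_neighborFinset_eq_degree]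
        refine card_le_card fun v hv => ?_
        obtain ⟨i, hi, rfl⟩ := mem_map.1 hv
        exact (mem_neighborFinset _ _ _).2 (hS i hi)
  have hup : K.degree (f 0) ≤ k := by
    rcases f 0 with a | b
    · rw [degree_completeBipartiteGraph_inl]; exact hβ
    · rw [degree_completeBipartiteGraph_inr]; exact hα
  omega

end CompleteBipartite

section LowerBound

variable {k x y z : ℕ}

/-- The paper's `x K_{m-1} ∪ y K_{m-2} ∪ z K_{m-3,m-3}` for `m = k + 3`. -/
def lowerBoundGraph (k x y z : ℕ) :
    SimpleGraph ((Fin x × Fin (k + 2)) ⊕ (Fin y × Fin (k + 1)) ⊕ (Fin z × (Fin k ⊕ Fin k))) :=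
  ((⊥ : SimpleGraph (Fin x)) □ (⊤ : SimpleGraph (Fin (k + 2)))) ⊕g
    (((⊥ : SimpleGraph (Fin y)) □ (⊤ : SimpleGraph (Fin (k + 1)))) ⊕g
      ((⊥ : SimpleGraph (Fin z)) □ completeBipartiteGraph (Fin k) (Fin k)))

lemma not_contains_Tstar_lowerBoundGraph (hk : 1 ≤ k) :
    ¬ Contains (lowerBoundGraph k x y z) (Tstar (k + 3)) := by
  have hT : (Tstar (k + 3)).Preconnected := preconnected_Tstar
  have hclique : ∀ {ι : Type} {a : ℕ}, a < k + 3 →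
      ¬ Contains ((⊥ : SimpleGraph ι) □ (⊤ : SimpleGraph (Fin a))) (Tstar (k + 3)) :=
    fun ha h => by
      have := (h.of_bot_boxProd hT).card_le
      simp only [Fintype.card_fin] at this
      omega
  unfold lowerBoundGraph
  intro h
  rcases h.of_sum hT with h | h
  · exact hclique (by omega) h
  rcases h.of_sum hT with h | h
  · exact hclique (by omega) h
  · exact not_contains_Tstar_completeBipartiteGraph hk (by simp) (by simp) (h.of_bot_boxProd hT)

lemma le_degree_lowerBoundGraph (v) [Fintype ((lowerBoundGraph k x y z).neighborSet v)] :
    k ≤ (lowerBoundGraph k x y z).degree v := by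
  classical
  rcases v with ⟨i, a⟩ | ⟨i, a⟩ | ⟨i, a | a⟩
  · calc k ≤ (⊤ : SimpleGraph (Fin (k + 2))).degree a := by simp
      _ ≤ _ := by
        convert Copy.degree_le (H := lowerBoundGraph k x y z)
          (Embedding.sumInl.comp (boxProdRight ⊥ ⊤ i)).toCopy a
        rfl
  · calc k ≤ (⊤ : SimpleGraph (Fin (k + 1))).degree a := by simp
      _ ≤ _ := by
        convert Copy.degree_le (H := lowerBoundGraph k x y z)
          ((Embedding.sumInr.comp Embedding.sumInl).comp (boxProdRight ⊥ ⊤ i)).toCopy a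
        rfl
  · calc k = (completeBipartiteGraph (Fin k) (Fin k)).degree (.inl a) := by
          rw [degree_completeBipartiteGraph_inl, Fintype.card_fin]
      _ ≤ _ := by
        convert Copy.degree_le (H := lowerBoundGraph k x y z)
          ((Embedding.sumInr.comp Embedding.sumInr).comp (boxProdRight ⊥ _ i)).toCopy (Sum.inl a)
        rfl
  · calc k = (completeBipartiteGraph (Fin k) (Fin k)).degree (.inr a) := by
          rw [degree_completeBipartiteGraph_inr, Fintype.card_fin]
      _ ≤ _ := by
        convert Copy.degree_le (H := lowerBoundGraph k x y z)
          ((Embedding.sumInr.comp Embedding.sumInr).comp (boxProdRight ⊥ _ i)).toCopy (Sum.inr a)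
        rfl

end LowerBound

lemma contains_Tstar_or_compl_contains_starGraph {V : Type*} [Fintype V] {k n : ℕ}
    (hk : 1 ≤ k) (hn : 0 < n) (hV : Fintype.card V = k + n + 1) (G : SimpleGraph V) :
    Contains G (Tstar (k + 3)) ∨ Contains Gᶜ (_root_.starGraph n) := by
  classical
  by_cases h : ∃ v, n - 1 ≤ Gᶜ.degree v
  · exact Or.inr ((contains_starGraph_iff hn).2 h)
  · push Not at h
    have : Nonempty V := Fintype.card_pos_iff.1 (by omega)
    refine Or.inl (contains_Tstar_of_le_degree hk fun v => ?_)
    have := G.degree_compl v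
    have := G.degree_lt_card_verts v
    have := h v
    omega

lemma card_lt_ramsey {V W₁ W₂ : Type*} [Fintype V] {G₁ : SimpleGraph W₁} {G₂ : SimpleGraph W₂}
    {N : ℕ} (hN : 0 < N) (hramsey : ∀ G : SimpleGraph (Fin N), Contains G G₁ ∨ Contains Gᶜ G₂)
    (G : SimpleGraph V) (h₁ : ¬ Contains G G₁) (h₂ : ¬ Contains Gᶜ G₂) :
    Fintype.card V < ramsey G₁ G₂ := by
  have hmem : ramsey G₁ G₂ ∈
      {N | 0 < N ∧ ∀ G : SimpleGraph (Fin N), Contains G G₁ ∨ Contains Gᶜ G₂} :=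
    Nat.sInf_mem ⟨N, hN, hramsey⟩
  obtain ⟨-, hall⟩ := hmem
  by_contra! hle
  obtain ⟨e⟩ : Nonempty (Fin (ramsey G₁ G₂) ↪ V) :=
    Function.Embedding.nonempty_of_card_le (by rwa [Fintype.card_fin])
  rcases hall (G.comap e) with ⟨f, hf⟩ | ⟨f, hf⟩
  · exact h₁ ⟨f.trans e, hf⟩
  · exact h₂ ⟨f.trans e, fun a b hab => ⟨e.injective.ne (hf a b hab).1, (hf a b hab).2⟩⟩

theorem stmt15_general {m n : ℕ} (hm : 5 ≤ m) (hmn : m < n)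
    (x y z : ℕ) (hrep : m + n - 4 = (m - 1) * x + (m - 2) * y + 2 * (m - 3) * z)
    (hub : ramsey (Tstar m) (_root_.starGraph n) ≤ m + n - 3) :
    ramsey (Tstar m) (_root_.starGraph n) = m + n - 3 := by
  obtain ⟨k, rfl⟩ : ∃ k, m = k + 3 := ⟨m - 3, by omega⟩
  have hk : 1 ≤ k := by omega
  have hn : 0 < n := by omega
  rw [show k + 3 + n - 4 = k + n - 1 by omega, show k + 3 - 1 = k + 2 by omega,
    show k + 3 - 2 = k + 1 by omega, show k + 3 - 3 = k by omega] at hrep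
  have hcard : Fintype.card ((Fin x × Fin (k + 2)) ⊕ (Fin y × Fin (k + 1)) ⊕
      (Fin z × (Fin k ⊕ Fin k))) = k + n - 1 := by
    simp only [Fintype.card_sum, Fintype.card_prod, Fintype.card_fin, hrep]
    ring
  classical
  have hlow := card_lt_ramsey (by omega : 0 < k + n + 1)
    (contains_Tstar_or_compl_contains_starGraph hk hn (Fintype.card_fin _))
    (lowerBoundGraph k x y z) (not_contains_Tstar_lowerBoundGraph hk)
    (not_contains_compl_starGraph_of_le_degree hn (fun v => le_degree_lowerBoundGraph v)
      (by omega))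
  omega

theorem stmt15 {m n : ℕ} (hm : 5 ≤ m) (hmn : m < n)
    (hndvd : ¬ (m - 1) ∣ (n - 2))
    (x y z : ℕ) (hrep : m + n - 4 = (m - 1) * x + (m - 2) * y + 2 * (m - 3) * z)
    (hub : ramsey (Tstar m) (_root_.starGraph n) ≤ m + n - 3) :
    ramsey (Tstar m) (_root_.starGraph n) = m + n - 3 :=
  stmt15_general hm hmn x y z hrep hub
end
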